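/- With g = ρ⁻²(dρ² + 𝗀) and f = ρ/η, the wave operator of f satisfies the exact identity: □_g f = -(n-1) f - ρ f² tr_𝗀(𝖣²η) + (1/2) ρ f tr_𝗀(∂_ρ 𝗀) + 2 f³ 𝗀(𝖣^♯η, 𝖣^♯η), where n = dim I, 𝖣²η is the vertical Hessian of η and tr_𝗀 denotes trace with respect to 𝗀. -/

import Mathlib

open Set

noncomputable section

/-- Partial derivative in the direction `μ` (`none` = `ρ`, `some a` = `x^a`). -/
def pd {n : ℕ} (μ : Option (Fin n)) (u : ℝ × (Fin n → ℝ) → ℝ) :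
    ℝ × (Fin n → ℝ) → ℝ := fun p =>
  match μ with
  | none => deriv (fun r => u (r, p.2)) p.1
  | some a => deriv (fun t => u (p.1, Function.update p.2 a t)) (p.2 a)

/-- Partial derivative of a boundary function in the `x^a`-direction. -/
def pdx {n : ℕ} (a : Fin n) (v : (Fin n → ℝ) → ℝ) : (Fin n → ℝ) → ℝ :=
  fun x => deriv (fun t => v (Function.update x a t)) (x a)

/-- Components of the Fefferman–Graham metric `g = ρ⁻²(dρ² + 𝗀)`. -/
def FGmet {n : ℕ} (g : ℝ × (Fin n → ℝ) → Fin n → Fin n → ℝ)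
    (p : ℝ × (Fin n → ℝ)) : Option (Fin n) → Option (Fin n) → ℝ
  | none, none => p.1⁻¹ ^ 2
  | none, some _ => 0
  | some _, none => 0
  | some b, some c => p.1⁻¹ ^ 2 * g p b c

/-- Components of the inverse Fefferman–Graham metric. -/
def FGinv {n : ℕ} (ginv : ℝ × (Fin n → ℝ) → Fin n → Fin n → ℝ)
    (p : ℝ × (Fin n → ℝ)) : Option (Fin n) → Option (Fin n) → ℝ
  | none, none => p.1 ^ 2
  | none, some _ => 0
  | some _, none => 0
  | some b, some c => p.1 ^ 2 * ginv p b c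

/-- Christoffel symbols `Γ^l_{μν}` of the Fefferman–Graham metric. -/
def FGChristoffel {n : ℕ} (g ginv : ℝ × (Fin n → ℝ) → Fin n → Fin n → ℝ)
    (l μ ν : Option (Fin n)) (p : ℝ × (Fin n → ℝ)) : ℝ :=
  (1 / 2) * ∑ s : Option (Fin n), FGinv ginv p l s *
    (pd μ (fun q => FGmet g q ν s) p + pd ν (fun q => FGmet g q μ s) p
      - pd s (fun q => FGmet g q μ ν) p)

/-- Christoffel symbols of the vertical metric `𝗀` on a `ρ`-level set. -/
def vChristoffel {n : ℕ} (g ginv : ℝ × (Fin n → ℝ) → Fin n → Fin n → ℝ)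
    (d b c : Fin n) (p : ℝ × (Fin n → ℝ)) : ℝ :=
  (1 / 2) * ∑ e : Fin n, ginv p d e *
    (pd (some b) (fun q => g q c e) p + pd (some c) (fun q => g q b e) p
      - pd (some e) (fun q => g q b c) p)

/-- The wave operator `□_g u = g^{μν}(∂²_{μν}u - Γ^l_{μν}∂_l u)` of the FG metric. -/
def FGbox {n : ℕ} (g ginv : ℝ × (Fin n → ℝ) → Fin n → Fin n → ℝ)
    (u : ℝ × (Fin n → ℝ) → ℝ) : ℝ × (Fin n → ℝ) → ℝ := fun p =>
  ∑ μ : Option (Fin n), ∑ ν : Option (Fin n), FGinv ginv p μ ν *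
    (pd μ (pd ν u) p - ∑ l : Option (Fin n), FGChristoffel g ginv l μ ν p * pd l u p)

/-- The vertical covariant Hessian `𝖣²_{bc}η = ∂²_{bc}η - 𝗀Γ^d_{bc} ∂_d η`. -/
def vHess {n : ℕ} (g ginv : ℝ × (Fin n → ℝ) → Fin n → Fin n → ℝ)
    (η : (Fin n → ℝ) → ℝ) (b c : Fin n) (p : ℝ × (Fin n → ℝ)) : ℝ :=
  pdx b (pdx c η) p.2 - ∑ d : Fin n, vChristoffel g ginv d b c p * pdx d η p.2

/-- The foliation function `f(ρ, x) = ρ / η(x)`. -/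
def fFol {n : ℕ} (η : (Fin n → ℝ) → ℝ) : ℝ × (Fin n → ℝ) → ℝ :=
  fun p => p.1 / η p.2


set_option linter.unusedSectionVars false

lemma hasDerivAt_pdx {n : ℕ} {v : (Fin n → ℝ) → ℝ} (hv : Differentiable ℝ v)
    (a : Fin n) (x : Fin n → ℝ) :
    HasDerivAt (fun t => v (Function.update x a t))
      (fderiv ℝ v x (Pi.single a (1:ℝ))) (x a) := by
  have h2 : HasFDerivAt v (fderiv ℝ v x) (Function.update x a (x a)) := by
    rw [Function.update_eq_self]; exact (hv x).hasFDerivAt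
  exact h2.comp_hasDerivAt (x a) (hasDerivAt_update x a (x a))

lemma pdx_eq {n : ℕ} {v : (Fin n → ℝ) → ℝ} (hv : Differentiable ℝ v)
    (a : Fin n) (x : Fin n → ℝ) :
    pdx a v x = fderiv ℝ v x (Pi.single a (1:ℝ)) :=
  (hasDerivAt_pdx hv a x).deriv

lemma hasDerivAt_pdx'' {n : ℕ} {v : (Fin n → ℝ) → ℝ} (hv : Differentiable ℝ v)
    (a : Fin n) (x : Fin n → ℝ) :
    HasDerivAt (fun t => v (Function.update x a t)) (pdx a v x) (x a) := by
  have h := hasDerivAt_pdx hv a x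
  rwa [← pdx_eq hv a x] at h

lemma pdx_contDiff {n : ℕ} {v : (Fin n → ℝ) → ℝ} (hv : ContDiff ℝ (⊤ : ℕ∞) v) (a : Fin n) :
    ContDiff ℝ (⊤ : ℕ∞) (pdx a v) := by
  have : pdx a v = fun x => fderiv ℝ v x (Pi.single a (1:ℝ)) :=
    funext fun x => pdx_eq (hv.differentiable (by simp)) a x
  rw [this]
  exact (hv.fderiv_right (by simp)).clm_apply contDiff_const

lemma hasDerivAt_pdx' {n : ℕ} {v : (Fin n → ℝ) → ℝ} (hv : ContDiff ℝ (⊤ : ℕ∞) v)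
    (a b : Fin n) (x : Fin n → ℝ) :
    HasDerivAt (fun t => pdx b v (Function.update x a t)) (pdx a (pdx b v) x) (x a) := by
  have h := hasDerivAt_pdx ((pdx_contDiff hv b).differentiable (by simp)) a x
  rwa [← pdx_eq ((pdx_contDiff hv b).differentiable (by simp)) a x] at h

section
variable {n : ℕ} {η : (Fin n → ℝ) → ℝ} (hη : ContDiff ℝ (⊤ : ℕ∞) η) (hpos : ∀ x, 0 < η x)
include hη hpos


lemma pd_none_fFol (p : ℝ × (Fin n → ℝ)) : pd none (fFol η) p = (η p.2)⁻¹ := by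
  show deriv (fun r => r / η p.2) p.1 = (η p.2)⁻¹
  have h : HasDerivAt (fun r : ℝ => r / η p.2) (1 / η p.2) p.1 :=
    (hasDerivAt_id p.1).div_const _
  rw [h.deriv, one_div]

lemma pd_some_fFol (a : Fin n) (p : ℝ × (Fin n → ℝ)) :
    pd (some a) (fFol η) p = -(p.1 * pdx a η p.2 / (η p.2) ^ 2) := by
  have hx : Function.update p.2 a (p.2 a) = p.2 := Function.update_eq_self _ _
  have h : HasDerivAt (fun t => p.1 / η (Function.update p.2 a t))
      ((0 * η p.2 - p.1 * pdx a η p.2) / η p.2 ^ 2) (p.2 a) := by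
    have := (hasDerivAt_const (p.2 a) p.1).div
      (hasDerivAt_pdx'' (hη.differentiable (by simp)) a p.2)
      (by rw [hx]; exact (hpos p.2).ne')
    rwa [hx] at this
  show deriv (fun t => p.1 / η (Function.update p.2 a t)) (p.2 a) = _
  rw [h.deriv]; ring

lemma pd_nn (p : ℝ × (Fin n → ℝ)) : pd none (pd none (fFol η)) p = 0 := by
  have h : pd none (fFol η) = fun q => (η q.2)⁻¹ :=
    funext fun q => pd_none_fFol hη hpos q
  show deriv (fun r => pd none (fFol η) (r, p.2)) p.1 = 0
  rw [h]
  simp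

lemma pd_sn (a : Fin n) (p : ℝ × (Fin n → ℝ)) :
    pd (some a) (pd none (fFol η)) p = -(pdx a η p.2 / (η p.2) ^ 2) := by
  have hx : Function.update p.2 a (p.2 a) = p.2 := Function.update_eq_self _ _
  have h : pd none (fFol η) = fun q => (η q.2)⁻¹ :=
    funext fun q => pd_none_fFol hη hpos q
  show deriv (fun t => pd none (fFol η) (p.1, Function.update p.2 a t)) (p.2 a) = _
  rw [h]
  have h2 : HasDerivAt (fun t => (η (Function.update p.2 a t))⁻¹)
      (-(pdx a η p.2 / η p.2 ^ 2)) (p.2 a) := by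
    have := (hasDerivAt_pdx'' (hη.differentiable (by simp)) a p.2).inv
      (by rw [hx]; exact (hpos p.2).ne')
    rw [hx] at this
    rw [neg_div] at this; exact this
  exact h2.deriv

lemma pd_ns (a : Fin n) (p : ℝ × (Fin n → ℝ)) :
    pd none (pd (some a) (fFol η)) p = -(pdx a η p.2 / (η p.2) ^ 2) := by
  have h : pd (some a) (fFol η) = fun q => -(q.1 * pdx a η q.2 / (η q.2) ^ 2) :=
    funext fun q => pd_some_fFol hη hpos a q
  show deriv (fun r => pd (some a) (fFol η) (r, p.2)) p.1 = _
  rw [h]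
  have h2 : HasDerivAt (fun r : ℝ => -(r * pdx a η p.2 / (η p.2) ^ 2))
      (-(1 * pdx a η p.2 / (η p.2) ^ 2)) p.1 :=
    (((hasDerivAt_id p.1).mul_const (pdx a η p.2)).div_const ((η p.2) ^ 2)).neg
  rw [h2.deriv]; ring

lemma pd_ss (b c : Fin n) (p : ℝ × (Fin n → ℝ)) :
    pd (some b) (pd (some c) (fFol η)) p
      = 2 * p.1 * pdx b η p.2 * pdx c η p.2 / (η p.2) ^ 3
        - p.1 * pdx b (pdx c η) p.2 / (η p.2) ^ 2 := by
  have hx : Function.update p.2 b (p.2 b) = p.2 := Function.update_eq_self _ _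
  have h : pd (some c) (fFol η) = fun q => -(q.1 * pdx c η q.2 / (η q.2) ^ 2) :=
    funext fun q => pd_some_fFol hη hpos c q
  show deriv (fun t => pd (some c) (fFol η) (p.1, Function.update p.2 b t)) (p.2 b) = _
  rw [h]
  have hnum : HasDerivAt (fun t => p.1 * pdx c η (Function.update p.2 b t))
      (p.1 * pdx b (pdx c η) p.2) (p.2 b) := (hasDerivAt_pdx' hη b c p.2).const_mul p.1
  have hden : HasDerivAt (fun t => (η (Function.update p.2 b t)) ^ 2)
      (2 * η p.2 ^ 1 * pdx b η p.2) (p.2 b) := by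
    have := (hasDerivAt_pdx'' (hη.differentiable (by simp)) b p.2).pow 2
    rwa [hx] at this
  have h2 : HasDerivAt
      (fun t => -(p.1 * pdx c η (Function.update p.2 b t) / (η (Function.update p.2 b t)) ^ 2))
      (-((p.1 * pdx b (pdx c η) p.2 * η p.2 ^ 2
          - p.1 * pdx c η p.2 * (2 * η p.2 ^ 1 * pdx b η p.2)) / (η p.2 ^ 2) ^ 2)) (p.2 b) := by
    have := (hnum.div hden (by rw [hx]; exact pow_ne_zero _ (hpos p.2).ne')).neg
    rwa [hx] at this
  rw [h2.deriv]
  have hne := (hpos p.2).ne'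
  field_simp
  ring

end

section
variable {n : ℕ} {g ginv : ℝ × (Fin n → ℝ) → Fin n → Fin n → ℝ}
  (hsmooth : ∀ b c : Fin n, ContDiff ℝ (⊤ : ℕ∞) (fun q => g q b c))
  {p : ℝ × (Fin n → ℝ)} (hρ : 0 < p.1)

-- differentiability of g along lines, with pd as HasDerivAt value
include hsmooth in
lemma hasDerivAt_g1 (b c : Fin n) :
    HasDerivAt (fun r => g (r, p.2) b c) (pd none (fun q => g q b c) p) p.1 := by
  have hd : DifferentiableAt ℝ (fun r : ℝ => g (r, p.2) b c) p.1 :=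
    ((hsmooth b c).differentiable (by simp) _).comp _
      ((differentiable_id.prodMk (differentiable_const p.2)) p.1)
  exact hd.hasDerivAt

include hsmooth in
lemma hasDerivAt_g2 (a b c : Fin n) :
    HasDerivAt (fun t => g (p.1, Function.update p.2 a t) b c)
      (pd (some a) (fun q => g q b c) p) (p.2 a) := by
  have hd : DifferentiableAt ℝ (fun t : ℝ => g (p.1, Function.update p.2 a t) b c) (p.2 a) :=
    ((hsmooth b c).differentiable (by simp) _).comp _
      ((HasDerivAt.prodMk (hasDerivAt_const (p.2 a) p.1) (hasDerivAt_update p.2 a (p.2 a))).differentiableAt)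
  exact hd.hasDerivAt

-- pd of FGmet components
include hρ in
lemma pdm_nn_n : pd none (fun q => FGmet g q none none) p = -2 * p.1⁻¹ ^ 3 := by
  show deriv (fun r : ℝ => r⁻¹ ^ 2) p.1 = _
  have h : HasDerivAt (fun r : ℝ => r⁻¹ ^ 2) (2 * p.1⁻¹ ^ 1 * (-(p.1 ^ 2)⁻¹)) p.1 :=
    (hasDerivAt_inv hρ.ne').pow 2
  rw [h.deriv]
  have := hρ.ne'
  field_simp

lemma pdm_nn_s (a : Fin n) : pd (some a) (fun q => FGmet g q none none) p = 0 := by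
  show deriv (fun _ : ℝ => p.1⁻¹ ^ 2) (p.2 a) = 0
  simp

lemma pdm_ns (μ : Option (Fin n)) (e : Fin n) :
    pd μ (fun q => FGmet g q none (some e)) p = 0 := by
  match μ with
  | none => show deriv (fun _ : ℝ => (0:ℝ)) p.1 = 0; simp
  | some a => show deriv (fun _ : ℝ => (0:ℝ)) (p.2 a) = 0; simp

lemma pdm_sn (μ : Option (Fin n)) (e : Fin n) :
    pd μ (fun q => FGmet g q (some e) none) p = 0 := by
  match μ with
  | none => show deriv (fun _ : ℝ => (0:ℝ)) p.1 = 0; simp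
  | some a => show deriv (fun _ : ℝ => (0:ℝ)) (p.2 a) = 0; simp

include hsmooth hρ in
lemma pdm_ss_n (b c : Fin n) :
    pd none (fun q => FGmet g q (some b) (some c)) p
      = -2 * p.1⁻¹ ^ 3 * g p b c + p.1⁻¹ ^ 2 * pd none (fun q => g q b c) p := by
  show deriv (fun r : ℝ => r⁻¹ ^ 2 * g (r, p.2) b c) p.1 = _
  have h : HasDerivAt (fun r : ℝ => r⁻¹ ^ 2 * g (r, p.2) b c)
      ((2 * p.1⁻¹ ^ 1 * (-(p.1 ^ 2)⁻¹)) * g (p.1, p.2) b c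
        + p.1⁻¹ ^ 2 * pd none (fun q => g q b c) p) p.1 :=
    ((hasDerivAt_inv hρ.ne').pow 2).mul (hasDerivAt_g1 hsmooth b c)
  rw [h.deriv]
  have := hρ.ne'
  field_simp

include hsmooth in
lemma pdm_ss_s (a b c : Fin n) :
    pd (some a) (fun q => FGmet g q (some b) (some c)) p
      = p.1⁻¹ ^ 2 * pd (some a) (fun q => g q b c) p := by
  show deriv (fun t : ℝ => p.1⁻¹ ^ 2 * g (p.1, Function.update p.2 a t) b c) (p.2 a) = _
  exact ((hasDerivAt_g2 (p := p) hsmooth a b c).const_mul (p.1⁻¹ ^ 2)).deriv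

-- Christoffel values
include hsmooth hρ in
lemma chr_nnn : FGChristoffel g ginv none none none p = -p.1⁻¹ := by
  rw [FGChristoffel, Fintype.sum_option]
  simp only [FGinv, pdm_nn_n hρ, pdm_nn_s, pdm_ns, zero_mul, mul_zero,
    Finset.sum_const_zero, add_zero]
  have := hρ.ne'
  field_simp
  ring

include hsmooth in
lemma chr_snn (d : Fin n) : FGChristoffel g ginv (some d) none none p = 0 := by
  rw [FGChristoffel, Fintype.sum_option]
  simp only [FGinv, pdm_ns, pdm_nn_s, zero_mul, mul_zero, Finset.sum_const_zero,
    add_zero, sub_zero, zero_add, zero_sub, neg_zero]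

include hsmooth hρ in
lemma chr_nss (b c : Fin n) :
    FGChristoffel g ginv none (some b) (some c) p
      = p.1⁻¹ * g p b c - (1/2) * pd none (fun q => g q b c) p := by
  rw [FGChristoffel, Fintype.sum_option]
  simp only [FGinv, pdm_ns, pdm_sn, pdm_ss_n hsmooth hρ, zero_mul, mul_zero,
    Finset.sum_const_zero, add_zero, zero_add, zero_sub]
  have := hρ.ne'
  field_simp
  ring

include hsmooth hρ in
lemma chr_sss (d b c : Fin n) :
    FGChristoffel g ginv (some d) (some b) (some c) p = vChristoffel g ginv d b c p := by
  rw [FGChristoffel, vChristoffel, Fintype.sum_option]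
  simp only [FGinv, pdm_ss_s hsmooth, zero_mul, zero_add]
  congr 1
  refine Finset.sum_congr rfl fun e _ => ?_
  have := hρ.ne'
  field_simp

end

/-- Lemma "Wave operator of f": the exact identity
`□_g f = -(n-1) f - ρ f² tr_𝗀(𝖣²η) + (1/2) ρ f tr_𝗀(∂_ρ 𝗀) + 2 f³ 𝗀(𝖣^♯η, 𝖣^♯η)`. -/
theorem stmt11 {n : ℕ} (η : (Fin n → ℝ) → ℝ)
    (g ginv : ℝ × (Fin n → ℝ) → Fin n → Fin n → ℝ)
    (hη : ContDiff ℝ (⊤ : ℕ∞) η) (hpos : ∀ x, 0 < η x)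
    (hsmooth : ∀ b c : Fin n, ContDiff ℝ (⊤ : ℕ∞) (fun q => g q b c))
    (hsym : ∀ p b c, g p b c = g p c b)
    (hinv : ∀ p b c, ∑ e : Fin n, g p b e * ginv p e c = if b = c then 1 else 0)
    (hinv' : ∀ p b c, ∑ e : Fin n, ginv p b e * g p e c = if b = c then 1 else 0)
    (p : ℝ × (Fin n → ℝ)) (hρ : 0 < p.1) :
    FGbox g ginv (fFol η) p
      = -((n : ℝ) - 1) * fFol η p
        - p.1 * (fFol η p) ^ 2 *
            (∑ b : Fin n, ∑ c : Fin n, ginv p b c * vHess g ginv η b c p)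
        + (1 / 2) * p.1 * fFol η p *
            (∑ b : Fin n, ∑ c : Fin n, ginv p b c * pd none (fun q => g q b c) p)
        + 2 * (fFol η p) ^ 3 *
            (∑ b : Fin n, ∑ c : Fin n, ginv p b c * pdx b η p.2 * pdx c η p.2) := by
  have hρ' := hρ.ne'
  have hE := (hpos p.2).ne'
  rw [FGbox]
  simp only [Fintype.sum_option, FGinv, zero_mul, mul_zero, Finset.sum_const_zero,
    add_zero, zero_add,
    pd_nn hη hpos, pd_ns hη hpos, pd_sn hη hpos, pd_ss hη hpos,
    pd_none_fFol hη hpos, pd_some_fFol hη hpos,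
    chr_nnn hsmooth hρ, chr_snn hsmooth, chr_nss hsmooth hρ, chr_sss hsmooth hρ,
    vHess]
  have tr : ∑ b : Fin n, ∑ c : Fin n, ginv p b c * g p b c = (n : ℝ) := by
    have h1 : ∀ b : Fin n, ∑ c : Fin n, ginv p b c * g p b c = 1 := by
      intro b
      calc ∑ c : Fin n, ginv p b c * g p b c
          = ∑ c : Fin n, ginv p b c * g p c b :=
            Finset.sum_congr rfl fun c _ => by rw [hsym p b c]
        _ = 1 := by rw [hinv' p b b]; simp
    simp [h1, Finset.card_univ]
  have key : ∀ b c : Fin n,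
      p.1 ^ 2 * ginv p b c *
        (2 * p.1 * pdx b η p.2 * pdx c η p.2 / η p.2 ^ 3
          - p.1 * pdx b (pdx c η) p.2 / η p.2 ^ 2 -
          ((p.1⁻¹ * g p b c - 1 / 2 * pd none (fun q => g q b c) p) * (η p.2)⁻¹ +
            ∑ d : Fin n, vChristoffel g ginv d b c p * -(p.1 * pdx d η p.2 / η p.2 ^ 2)))
      = -((p.1 / η p.2) * (ginv p b c * g p b c))
        - p.1 * (p.1 / η p.2) ^ 2 *
            (ginv p b c * (pdx b (pdx c η) p.2
              - ∑ d : Fin n, vChristoffel g ginv d b c p * pdx d η p.2))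
        + 1 / 2 * p.1 * (p.1 / η p.2) * (ginv p b c * pd none (fun q => g q b c) p)
        + 2 * (p.1 / η p.2) ^ 3 * (ginv p b c * pdx b η p.2 * pdx c η p.2) := by
    intro b c
    have inner : ∑ d : Fin n, vChristoffel g ginv d b c p * -(p.1 * pdx d η p.2 / η p.2 ^ 2)
        = (-(p.1 / η p.2 ^ 2)) * ∑ d : Fin n, vChristoffel g ginv d b c p * pdx d η p.2 := by
      rw [Finset.mul_sum]
      exact Finset.sum_congr rfl fun d _ => by ring
    rw [inner]
    generalize (∑ d : Fin n, vChristoffel g ginv d b c p * pdx d η p.2) = S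
    field_simp
    ring
  rw [Finset.sum_congr rfl fun b (_ : b ∈ Finset.univ) =>
    Finset.sum_congr rfl fun c (_ : c ∈ Finset.univ) => key b c]
  simp only [fFol]
  simp only [Finset.sum_add_distrib, Finset.sum_sub_distrib, Finset.sum_neg_distrib,
    ← Finset.mul_sum]
  rw [tr]
  have h1 : p.1 ^ 2 * (0 - -p.1⁻¹ * (η p.2)⁻¹) = p.1 / η p.2 := by
    field_simp
    ring
  rw [h1]
  ring

end
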